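/- arXiv:1608.00150 — 5 statements merged into one kernel-verified Lean document; each statement's English description precedes it below -/
import Mathlib

section
/- Let A be an irreducible nonnegative real n×n matrix with Perron–Frobenius eigenvalue μ, and let v, u be positive right and left eigenvectors of A for μ. Then adj(μI − A) is a scalar multiple of the rank-one matrix v uᵀ. -/
open Matrix Polynomial

/-- Powers of an entrywise-nonnegative matrix are entrywise nonnegative. -/
lemma aux_pow_nonneg {n : ℕ} (A : Matrix (Fin n) (Fin n) ℝ)
    (hnonneg : ∀ i j, 0 ≤ A i j) : ∀ m i j, 0 ≤ (A ^ m) i j := by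
  intro m
  induction m with
  | zero =>
    intro i j
    by_cases h : i = j <;> simp [pow_zero, Matrix.one_apply, h]
  | succ m ih =>
    intro i j
    rw [pow_succ, Matrix.mul_apply]
    exact Finset.sum_nonneg fun k _ => mul_nonneg (ih i k) (hnonneg k j)

/-- Any eigenvector of an irreducible nonnegative matrix for the eigenvalue possessing
a positive eigenvector is a multiple of that positive eigenvector. -/
lemma aux_ker {n : ℕ} (A : Matrix (Fin n) (Fin n) ℝ)
    (hnonneg : ∀ i j, 0 ≤ A i j)
    (hirr : ∀ i j, ∃ k : ℕ, 0 < (A ^ (k + 1)) i j)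
    (μ : ℝ) (v : Fin n → ℝ) (hv : ∀ i, 0 < v i) (hAv : A.mulVec v = μ • v)
    (x : Fin n → ℝ) (hx : A.mulVec x = μ • x) : ∃ t : ℝ, x = t • v := by
  rcases isEmpty_or_nonempty (Fin n) with hemp | hne
  · exact ⟨0, funext fun i => (IsEmpty.false i).elim⟩
  obtain ⟨i0, -, hmin⟩ := Finset.exists_min_image Finset.univ (fun i => x i / v i)
    ⟨Classical.arbitrary _, Finset.mem_univ _⟩
  set t : ℝ := x i0 / v i0 with ht
  set y : Fin n → ℝ := x - t • v with hy
  have hAy : A.mulVec y = μ • y := by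
    rw [hy, Matrix.mulVec_sub, hx, Matrix.mulVec_smul, hAv, smul_sub, smul_comm]
  have hy0 : ∀ i, 0 ≤ y i := by
    intro i
    have h1 : t ≤ x i / v i := hmin i (Finset.mem_univ i)
    have h2 : t * v i ≤ x i := by
      rw [← le_div_iff₀ (hv i)]; exact h1
    simpa [hy, sub_nonneg] using h2
  have hyi0 : y i0 = 0 := by
    simp [hy, ht, div_mul_cancel₀ _ (ne_of_gt (hv i0))]
  have hpow : ∀ m : ℕ, (A ^ m).mulVec y = μ ^ m • y := by
    intro m
    induction m with
    | zero => simp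
    | succ m ih =>
      rw [pow_succ', ← Matrix.mulVec_mulVec, ih, Matrix.mulVec_smul, hAy, smul_smul,
        ← pow_succ]
  have hyzero : ∀ j, y j = 0 := by
    intro j
    obtain ⟨k, hk⟩ := hirr i0 j
    have hsum : ((A ^ (k + 1)).mulVec y) i0 = 0 := by
      rw [hpow]
      simp [hyi0]
    rw [Matrix.mulVec, dotProduct] at hsum
    have hterm : ∀ l ∈ Finset.univ, 0 ≤ (A ^ (k + 1)) i0 l * y l :=
      fun l _ => mul_nonneg (aux_pow_nonneg A hnonneg _ i0 l) (hy0 l)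
    have := (Finset.sum_eq_zero_iff_of_nonneg hterm).mp hsum j (Finset.mem_univ j)
    rcases mul_eq_zero.mp this with h | h
    · exact absurd h (ne_of_gt hk)
    · exact h
  refine ⟨t, ?_⟩
  funext i
  have := hyzero i
  simp only [hy, Pi.sub_apply, Pi.smul_apply, smul_eq_mul, sub_eq_zero] at this
  simpa using this

/-- For an irreducible nonnegative real matrix `A` with
Perron–Frobenius eigenvalue `μ` and positive right/left eigenvectors `v`, `u`,
the adjugate `adj (μI - A)` is a scalar multiple of the rank-one matrix `v uᵀ`. -/
theorem stmt1 {n : ℕ} (A : Matrix (Fin n) (Fin n) ℝ)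
    (hnonneg : ∀ i j, 0 ≤ A i j)
    (hirr : ∀ i j, ∃ k : ℕ, 0 < (A ^ (k + 1)) i j)
    (μ : ℝ) (hpos : 0 < μ)
    (hsimple : A.charpoly.rootMultiplicity μ = 1)
    (hdom : ∀ z : ℂ, (A.map Complex.ofReal).charpoly.IsRoot z → ‖z‖ ≤ μ)
    (v u : Fin n → ℝ) (hv : ∀ i, 0 < v i) (hu : ∀ i, 0 < u i)
    (hAv : A.mulVec v = μ • v) (huA : Matrix.vecMul u A = μ • u) :
    ∃ c : ℝ, Matrix.adjugate (μ • (1 : Matrix (Fin n) (Fin n) ℝ) - A)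
      = c • Matrix.vecMulVec v u := by
  rcases isEmpty_or_nonempty (Fin n) with hemp | hne
  · exact ⟨0, by ext i j; exact (IsEmpty.false i).elim⟩
  set B : Matrix (Fin n) (Fin n) ℝ := μ • (1 : Matrix (Fin n) (Fin n) ℝ) - A with hB
  -- B annihilates v
  have hBv : B.mulVec v = 0 := by
    rw [hB, Matrix.sub_mulVec, Matrix.smul_mulVec, Matrix.one_mulVec, hAv, sub_self]
  -- det B = 0
  have hdet : B.det = 0 := by
    rw [← Matrix.exists_mulVec_eq_zero_iff]
    refine ⟨v, ?_, hBv⟩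
    intro h
    have := congrFun h (Classical.arbitrary _)
    exact absurd this (ne_of_gt (hv _))
  have hmulB : B * B.adjugate = 0 := by rw [Matrix.mul_adjugate, hdet, zero_smul]
  have hBmul : B.adjugate * B = 0 := by rw [Matrix.adjugate_mul, hdet, zero_smul]
  have key : A * B.adjugate = μ • B.adjugate := by
    have h : (μ • (1 : Matrix (Fin n) (Fin n) ℝ) - A) * B.adjugate = 0 := hmulB
    rw [sub_mul, smul_mul_assoc, one_mul, sub_eq_zero] at h
    exact h.symm
  -- each column of adjugate B is an eigenvector of A
  have hcol : ∀ j, A.mulVec (fun i => B.adjugate i j) = μ • (fun i => B.adjugate i j) := by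
    intro j
    funext i
    have h1 : (A * B.adjugate) i j = (μ • B.adjugate) i j := by rw [key]
    simpa [Matrix.mul_apply, Matrix.mulVec, dotProduct] using h1
  choose t ht using fun j =>
    aux_ker A hnonneg hirr μ v hv hAv _ (hcol j)
  have hadj : ∀ i j, B.adjugate i j = t j * v i := by
    intro i j
    have := congrFun (ht j) i
    simpa [mul_comm] using this
  -- the coefficient vector t is a left eigenvector
  have htB : Matrix.vecMul t B = 0 := by
    funext j
    obtain ⟨i⟩ := hne
    have h1 : (B.adjugate * B) i j = 0 := by rw [hBmul]; rfl
    rw [Matrix.mul_apply] at h1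
    have h2 : ∑ k, t k * v i * B k j = 0 := by
      rw [← h1]
      exact Finset.sum_congr rfl fun k _ => by rw [hadj]
    have h3 : v i * ∑ k, t k * B k j = 0 := by
      rw [Finset.mul_sum, ← h2]
      exact Finset.sum_congr rfl fun k _ => by ring
    have h4 : ∑ k, t k * B k j = 0 :=
      (mul_eq_zero.mp h3).resolve_left (ne_of_gt (hv i))
    simpa [Matrix.vecMul, dotProduct] using h4
  have htA : Matrix.vecMul t A = μ • t := by
    have h1 : Matrix.vecMul t (μ • (1 : Matrix (Fin n) (Fin n) ℝ)) = μ • t := by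
      funext j
      simp [Matrix.vecMul, dotProduct, Matrix.one_apply, Finset.sum_ite_eq,
        mul_comm]
    rw [hB, Matrix.vecMul_sub, h1, sub_eq_zero] at htB
    exact htB.symm
  -- hence t is a multiple of u, via the transposed matrix
  have htu : ∃ s : ℝ, t = s • u := by
    apply aux_ker Aᵀ (fun i j => hnonneg j i)
      (fun i j => by obtain ⟨k, hk⟩ := hirr j i; exact ⟨k, by rwa [← Matrix.transpose_pow, Matrix.transpose_apply]⟩)
      μ u hu
    · rw [Matrix.mulVec_transpose]; exact huA
    · rw [Matrix.mulVec_transpose]; exact htA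
  obtain ⟨s, hs⟩ := htu
  refine ⟨s, ?_⟩
  ext i j
  rw [hadj i j, hs]
  simp [Matrix.vecMulVec_apply]
  ring
end

section
/- Let A be an irreducible nonnegative real n×n matrix with Perron–Frobenius eigenvalue μ, characteristic polynomial p_A, and Perron projection P. Then tr(adj(μI − A)) = p_A′(μ), and consequently P = adj(μI − A) / p_A′(μ). -/
open Matrix Polynomial Finset

variable {R : Type*} [CommRing R] {m : Type*} [Fintype m] [DecidableEq m]

lemma myDerivProd {ι : Type*} [DecidableEq ι] (s : Finset ι) (f : ι → R[X]) :
    derivative (∏ i ∈ s, f i) = ∑ i ∈ s, (∏ j ∈ s.erase i, f j) * derivative (f i) := by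
  induction s using Finset.induction_on with
  | empty => simp
  | @insert a s h ih =>
    rw [Finset.prod_insert h, derivative_mul, ih, Finset.sum_insert h, erase_insert h]
    rw [Finset.mul_sum, mul_comm (derivative (f a)) (∏ i ∈ s, f i)]
    congr 1
    refine Finset.sum_congr rfl fun i hi => ?_
    rw [Finset.erase_insert_of_ne (by rintro rfl; exact h hi), Finset.prod_insert
      (fun hmem => h (Finset.mem_of_mem_erase hmem)), mul_assoc]

lemma myDerivDet (M : Matrix m m R[X]) :
    derivative M.det = ∑ i, (M.updateRow i (fun j => derivative (M i j))).det := by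
  rw [det_apply, map_sum]
  have key : ∀ σ : Equiv.Perm m,
      derivative (Equiv.Perm.sign σ • ∏ i, M (σ i) i)
        = ∑ i, Equiv.Perm.sign σ • ((∏ j ∈ univ.erase i, M (σ j) j) * derivative (M (σ i) i)) := by
    intro σ
    rw [Units.smul_def, map_zsmul, myDerivProd, Finset.smul_sum]
    simp [Units.smul_def]
  simp_rw [key]
  have rhs : ∑ i, (M.updateRow i fun j => derivative (M i j)).det
      = ∑ σ : Equiv.Perm m, ∑ i, Equiv.Perm.sign σ •
          ∏ j, (M.updateRow i fun j' => derivative (M i j')) (σ j) j := by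
    simp_rw [det_apply]; rw [Finset.sum_comm]
  rw [rhs]
  refine Finset.sum_congr rfl fun σ _ => ?_
  refine Fintype.sum_equiv σ _ _ fun x => ?_
  congr 1
  rw [← Finset.mul_prod_erase univ _ (Finset.mem_univ x), updateRow_self, mul_comm]
  congr 1
  refine Finset.prod_congr rfl fun j hj => ?_
  rw [updateRow_ne]
  exact fun e => (Finset.ne_of_mem_erase hj) (σ.injective e)

lemma myDerivCharpoly (A : Matrix m m R) :
    derivative A.charpoly = Matrix.trace (adjugate (charmatrix A)) := by
  rw [Matrix.charpoly, myDerivDet, Matrix.trace]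
  refine Finset.sum_congr rfl fun i _ => ?_
  rw [Matrix.diag, adjugate_apply]
  have hfun : (fun j => derivative (charmatrix A i j)) = Pi.single i 1 := by
    funext j
    by_cases h : i = j
    · subst h; simp [charmatrix_apply_eq, Pi.single_eq_same]
    · rw [charmatrix_apply_ne _ _ _ h, Pi.single_eq_of_ne (Ne.symm h)]
      simp
  rw [hfun]

lemma myCharmatrixMap (A : Matrix m m R) (r : R) :
    (charmatrix A).map (eval r) = r • (1 : Matrix m m R) - A := by
  ext i j
  by_cases h : i = j
  · subst h
    simp [charmatrix_apply_eq, Matrix.one_apply_eq]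
  · simp [charmatrix_apply_ne _ _ _ h, Matrix.one_apply_ne h]

lemma myEvalCharpoly (A : Matrix m m R) (r : R) :
    eval r A.charpoly = (r • (1 : Matrix m m R) - A).det := by
  rw [Matrix.charpoly, ← myCharmatrixMap A r, ← Polynomial.coe_evalRingHom]
  show (evalRingHom r) _ = _
  rw [RingHom.map_det, RingHom.mapMatrix_apply]

lemma myPart1 (A : Matrix m m R) (r : R) :
    Matrix.trace (adjugate (r • (1 : Matrix m m R) - A)) = eval r (derivative A.charpoly) := by
  rw [myDerivCharpoly, ← myCharmatrixMap A r, ← Polynomial.coe_evalRingHom,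
    ← RingHom.mapMatrix_apply (evalRingHom r), ← RingHom.map_adjugate]
  simp [Matrix.trace, Matrix.diag, RingHom.mapMatrix_apply, Matrix.map_apply, eval_finset_sum]

lemma myPowNonneg {n : ℕ} (A : Matrix (Fin n) (Fin n) ℝ) (h : ∀ i j, 0 ≤ A i j) :
    ∀ (k : ℕ) (i j : Fin n), 0 ≤ (A ^ k) i j := by
  intro k
  induction k with
  | zero =>
    intro i j
    by_cases hij : i = j <;> simp [hij, Matrix.one_apply]
  | succ k ih =>
    intro i j
    rw [pow_succ, Matrix.mul_apply]
    exact Finset.sum_nonneg fun l _ => mul_nonneg (ih i l) (h l j)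

lemma myEigUnique {n : ℕ} (A : Matrix (Fin n) (Fin n) ℝ)
    (hnonneg : ∀ i j, 0 ≤ A i j) (hirr : ∀ i j, ∃ k : ℕ, 0 < (A ^ (k + 1)) i j)
    (μ : ℝ) (v : Fin n → ℝ) (hv : ∀ i, 0 < v i) (hAv : A.mulVec v = μ • v)
    (w : Fin n → ℝ) (hw : A.mulVec w = μ • w) : ∃ c : ℝ, w = c • v := by
  rcases Nat.eq_zero_or_pos n with hn | hn
  · exact ⟨0, funext fun i => absurd i.2 (by omega)⟩
  obtain ⟨i0, -, hmin⟩ := Finset.exists_min_image Finset.univ (fun i => w i / v i)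
    ⟨⟨0, hn⟩, Finset.mem_univ _⟩
  set t : ℝ := w i0 / v i0 with ht
  refine ⟨t, ?_⟩
  set z : Fin n → ℝ := w - t • v with hz
  have hznn : ∀ i, 0 ≤ z i := by
    intro i
    have h1 : t ≤ w i / v i := hmin i (Finset.mem_univ i)
    have h2 : t * v i ≤ w i := (le_div_iff₀ (hv i)).mp h1
    simpa [hz, sub_nonneg] using h2
  have hz0 : z i0 = 0 := by
    simp [hz, ht, div_mul_cancel₀ _ (ne_of_gt (hv i0))]
  have hAz : A.mulVec z = μ • z := by
    rw [hz, Matrix.mulVec_sub, Matrix.mulVec_smul, hAv, hw, smul_sub, smul_smul, smul_smul,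
      mul_comm]
  have hpow : ∀ k : ℕ, (A ^ (k + 1)).mulVec z = μ ^ (k + 1) • z := by
    intro k
    induction k with
    | zero => simpa using hAz
    | succ k ih =>
      rw [pow_succ', ← Matrix.mulVec_mulVec, ih, Matrix.mulVec_smul, hAz, smul_smul, ← pow_succ]
  have hzzero : z = 0 := by
    by_contra hne
    obtain ⟨j, hj⟩ : ∃ j, 0 < z j := by
      by_contra hall
      push_neg at hall
      exact hne (funext fun i => le_antisymm (hall i) (hznn i))
    obtain ⟨k, hk⟩ := hirr i0 j
    have h1 : 0 < ((A ^ (k + 1)).mulVec z) i0 := by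
      rw [Matrix.mulVec, dotProduct]
      exact Finset.sum_pos'
        (fun l _ => mul_nonneg (myPowNonneg A hnonneg (k + 1) i0 l) (hznn l))
        ⟨j, Finset.mem_univ j, mul_pos hk hj⟩
    rw [hpow k] at h1
    simp [hz0] at h1
  have : w - t • v = 0 := by rw [← hz, hzzero]
  exact sub_eq_zero.mp this


/-- For an irreducible nonnegative real matrix `A` with
Perron–Frobenius eigenvalue `μ`, characteristic polynomial `p_A`, and Perron
projection `P = v uᵀ/(uᵀ v)`, one has `tr (adj (μI - A)) = p_A′(μ)` and
`P = adj (μI - A) / p_A′(μ)`. -/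
theorem stmt3 {n : ℕ} (A : Matrix (Fin n) (Fin n) ℝ)
    (hnonneg : ∀ i j, 0 ≤ A i j)
    (hirr : ∀ i j, ∃ k : ℕ, 0 < (A ^ (k + 1)) i j)
    (μ : ℝ) (hpos : 0 < μ)
    (hsimple : A.charpoly.rootMultiplicity μ = 1)
    (hdom : ∀ z : ℂ, (A.map Complex.ofReal).charpoly.IsRoot z → ‖z‖ ≤ μ)
    (v u : Fin n → ℝ) (hv : ∀ i, 0 < v i) (hu : ∀ i, 0 < u i)
    (hAv : A.mulVec v = μ • v) (huA : Matrix.vecMul u A = μ • u) :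
    Matrix.trace (Matrix.adjugate (μ • (1 : Matrix (Fin n) (Fin n) ℝ) - A))
      = Polynomial.eval μ (Polynomial.derivative A.charpoly) ∧
    (u ⬝ᵥ v)⁻¹ • Matrix.vecMulVec v u
      = (Polynomial.eval μ (Polynomial.derivative A.charpoly))⁻¹ •
        Matrix.adjugate (μ • (1 : Matrix (Fin n) (Fin n) ℝ) - A) := by
  have hP1 := myPart1 A μ
  refine ⟨hP1, ?_⟩
  have hmono := A.charpoly_monic
  have hchar0 : A.charpoly.IsRoot μ :=
    (Polynomial.rootMultiplicity_pos hmono.ne_zero).mp (by rw [hsimple]; norm_num)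
  have hn : 0 < n := by
    by_contra h0
    push_neg at h0
    interval_cases n
    have h1 : A.charpoly = 1 := by rw [Matrix.charpoly]; exact Matrix.det_isEmpty
    rw [h1] at hchar0
    simpa [Polynomial.IsRoot] using hchar0
  have i0 : Fin n := ⟨0, hn⟩
  have hdet : (μ • (1 : Matrix (Fin n) (Fin n) ℝ) - A).det = 0 := by
    rw [← myEvalCharpoly]; exact hchar0
  set B := Matrix.adjugate (μ • (1 : Matrix (Fin n) (Fin n) ℝ) - A) with hBdef
  have hABl : (μ • (1 : Matrix (Fin n) (Fin n) ℝ) - A) * B = 0 := by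
    rw [hBdef, Matrix.mul_adjugate, hdet, zero_smul]
  have hABr : B * (μ • (1 : Matrix (Fin n) (Fin n) ℝ) - A) = 0 := by
    rw [hBdef, Matrix.adjugate_mul, hdet, zero_smul]
  have hAB : A * B = μ • B := by
    rw [sub_mul, smul_mul_assoc, one_mul, sub_eq_zero] at hABl
    exact hABl.symm
  have hBA : B * A = μ • B := by
    rw [mul_sub, mul_smul_comm, mul_one, sub_eq_zero] at hABr
    exact hABr.symm
  have hcols : ∀ j, ∃ c : ℝ, (fun i => B i j) = c • v := by
    intro j
    apply myEigUnique A hnonneg hirr μ v hv hAv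
    funext i
    have h := congrFun (congrFun hAB i) j
    simpa [Matrix.mulVec, dotProduct, Matrix.mul_apply] using h
  have hTirr : ∀ i j, ∃ k : ℕ, 0 < ((Aᵀ) ^ (k + 1)) i j := by
    intro i j
    obtain ⟨k, hk⟩ := hirr j i
    exact ⟨k, by rwa [← Matrix.transpose_pow, Matrix.transpose_apply]⟩
  have hTu : Aᵀ.mulVec u = μ • u := by rw [Matrix.mulVec_transpose, huA]
  have hrows : ∀ i, ∃ d : ℝ, B i = d • u := by
    intro i
    apply myEigUnique Aᵀ (fun a b => hnonneg b a) hTirr μ u hu hTu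
    funext j
    have h := congrFun (congrFun hBA i) j
    simpa [Matrix.mulVec, dotProduct, Matrix.mul_apply, Matrix.transpose_apply, mul_comm]
      using h
  choose c hc using hcols
  choose d hd using hrows
  have hBij : ∀ i j, B i j = c j * v i := fun i j => by simpa using congrFun (hc j) i
  have hBij' : ∀ i j, B i j = d i * u j := fun i j => by simpa using congrFun (hd i) j
  set κ : ℝ := c i0 / u i0 with hκdef
  have hκ : ∀ i j, B i j = κ * (v i * u j) := by
    intro i j
    have h1 : c i0 * v i = d i * u i0 := by rw [← hBij i i0, hBij' i i0]
    have h2 : d i = κ * v i := by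
      have hu0 : u i0 ≠ 0 := ne_of_gt (hu i0)
      rw [hκdef]
      field_simp
      linarith [h1]
    rw [hBij' i j, h2]; ring
  have htr : Matrix.trace B = κ * (u ⬝ᵥ v) := by
    rw [Matrix.trace, dotProduct, Finset.mul_sum]
    refine Finset.sum_congr rfl fun i _ => ?_
    rw [Matrix.diag, hκ i i]; ring
  have hs : 0 < u ⬝ᵥ v :=
    Finset.sum_pos (fun i _ => mul_pos (hu i) (hv i)) ⟨i0, Finset.mem_univ i0⟩
  have hD : Polynomial.eval μ (Polynomial.derivative A.charpoly) ≠ 0 := by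
    intro h0
    have h2 : 1 < A.charpoly.rootMultiplicity μ := by
      rw [Polynomial.one_lt_rootMultiplicity_iff_isRoot_iterate_derivative hmono.ne_zero]
      intro m hm
      interval_cases m
      · exact hchar0
      · simpa [Polynomial.IsRoot] using h0
    omega
  set D : ℝ := Polynomial.eval μ (Polynomial.derivative A.charpoly) with hDdef
  have hκD : κ * (u ⬝ᵥ v) = D := by rw [← htr, hP1]
  ext i j
  rw [Matrix.smul_apply, Matrix.smul_apply, Matrix.vecMulVec_apply, hκ i j]
  have hκ0 : κ ≠ 0 := by
    intro h
    exact hD (by rw [← hκD, h, zero_mul])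
  have hfin : D⁻¹ * κ = (u ⬝ᵥ v)⁻¹ := by
    rw [← hκD, mul_inv]
    field_simp
  rw [smul_eq_mul, smul_eq_mul, ← hfin]
  ring
end

section
/- Let A be an irreducible nonnegative real n×n matrix with eigenvalues μ, μ₂, …, μ_n, where μ is the Perron–Frobenius eigenvalue, and let P be the Perron projection. Then P = ∏_{i=2}^{n}(A − μ_iI) / ∏_{i=2}^{n}(μ − μ_i). -/
open Matrix Polynomial

lemma powMulVec {m : ℕ} {R : Type*} [CommRing R] (B : Matrix (Fin m) (Fin m) R)
    (μ : R) (x : Fin m → R) (hx : B.mulVec x = μ • x) (k : ℕ) :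
    (B ^ k).mulVec x = (μ ^ k) • x := by
  induction k with
  | zero => simp [Matrix.one_mulVec]
  | succ k ih =>
    rw [pow_succ', pow_succ', ← Matrix.mulVec_mulVec, ih, Matrix.mulVec_smul, hx,
      smul_smul, mul_comm μ]

lemma powNonneg {m : ℕ} (A : Matrix (Fin m) (Fin m) ℝ) (hA : ∀ i j, 0 ≤ A i j)
    (k : ℕ) : ∀ i j, 0 ≤ (A ^ (k + 1)) i j := by
  induction k with
  | zero => simpa using hA
  | succ k ih =>
    intro i j
    rw [pow_succ, Matrix.mul_apply]
    exact Finset.sum_nonneg fun m _ => mul_nonneg (ih i m) (hA m j)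

lemma zeroprop {n : ℕ} (A : Matrix (Fin (n+1)) (Fin (n+1)) ℝ)
    (hnonneg : ∀ i j, 0 ≤ A i j)
    (hirr : ∀ i j, ∃ k : ℕ, 0 < (A ^ (k + 1)) i j)
    (μ : ℝ) (hpos : 0 < μ) (d : Fin (n+1) → ℝ) (hd : ∀ i, 0 ≤ d i)
    (hAd : A.mulVec d = μ • d) (i : Fin (n+1)) (hdi : d i = 0) :
    ∀ j, d j = 0 := by
  intro j
  obtain ⟨k, hk⟩ := hirr i j
  have h0 : ((A ^ (k+1)).mulVec d) i = 0 := by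
    rw [powMulVec A μ d hAd (k+1)]
    simp [hdi]
  rw [Matrix.mulVec, dotProduct] at h0
  have hterm := (Finset.sum_eq_zero_iff_of_nonneg
    (fun m _ => mul_nonneg (powNonneg A hnonneg k i m) (hd m))).mp h0 j (Finset.mem_univ j)
  have := mul_eq_zero.mp hterm
  rcases this with h | h
  · exact absurd h (ne_of_gt hk)
  · exact h

lemma key {n : ℕ} (A : Matrix (Fin (n+1)) (Fin (n+1)) ℝ)
    (hnonneg : ∀ i j, 0 ≤ A i j)
    (hirr : ∀ i j, ∃ k : ℕ, 0 < (A ^ (k + 1)) i j)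
    (μ : ℝ) (hpos : 0 < μ)
    (v u : Fin (n + 1) → ℝ) (hv : ∀ i, 0 < v i) (hu : ∀ i, 0 < u i)
    (hAv : A.mulVec v = μ • v) (huA : Matrix.vecMul u A = μ • u)
    (w : Fin (n+1) → ℂ)
    (hw : (A.map Complex.ofReal).mulVec w = (μ : ℂ) • w) :
    ∃ c : ℂ, ∀ i, w i = c * v i := by
  set a : Fin (n+1) → ℝ := fun i => ‖w i‖ with ha
  have hwent : ∀ i, ∑ j, (A i j : ℂ) * w j = (μ : ℂ) * w i := by
    intro i
    have := congrFun hw i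
    simpa [Matrix.mulVec, dotProduct, Matrix.map_apply] using this
  have hle : ∀ i, μ * a i ≤ (A.mulVec a) i := by
    intro i
    have h1 : ‖(μ : ℂ) * w i‖ = μ * a i := by
      rw [norm_mul, Complex.norm_real, Real.norm_eq_abs, abs_of_pos hpos]
    rw [← h1, ← hwent i]
    calc ‖∑ j, (A i j : ℂ) * w j‖ ≤ ∑ j, ‖(A i j : ℂ) * w j‖ :=
          norm_sum_le _ _
      _ = (A.mulVec a) i := by
          simp [Matrix.mulVec, dotProduct, norm_mul, Complex.norm_real, Real.norm_eq_abs,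
            abs_of_nonneg (hnonneg i _), ha]
  have heq : A.mulVec a = μ • a := by
    have hsum : ∑ i, u i * ((A.mulVec a) i - μ * a i) = 0 := by
      have h1 : ∑ i, u i * (A.mulVec a) i = u ⬝ᵥ A.mulVec a := rfl
      have h2 : u ⬝ᵥ A.mulVec a = μ * (u ⬝ᵥ a) := by
        rw [Matrix.dotProduct_mulVec, huA, smul_dotProduct]
        rfl
      simp only [mul_sub]
      rw [Finset.sum_sub_distrib, h1, h2, dotProduct, Finset.mul_sum]
      rw [sub_eq_zero]
      congr 1
      funext i
      ring
    have hterm : ∀ i ∈ Finset.univ, u i * ((A.mulVec a) i - μ * a i) = 0 :=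
      (Finset.sum_eq_zero_iff_of_nonneg
        (fun i _ => mul_nonneg (hu i).le (sub_nonneg.mpr (hle i)))).mp hsum
    funext i
    have := hterm i (Finset.mem_univ i)
    have h3 : (A.mulVec a) i - μ * a i = 0 := by
      rcases mul_eq_zero.mp this with h | h
      · exact absurd h (ne_of_gt (hu i))
      · exact h
    simp only [Pi.smul_apply, smul_eq_mul]
    linarith
  by_cases hw0 : ∀ i, w i = 0
  · exact ⟨0, fun i => by simp [hw0 i]⟩
  push_neg at hw0
  obtain ⟨i₀, hi₀⟩ := hw0
  have hai₀ : 0 < a i₀ := by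
    simp only [ha]
    exact norm_pos_iff.mpr hi₀
  have hapos : ∀ i, 0 < a i := by
    intro i
    rcases lt_or_eq_of_le (norm_nonneg (w i)) with h | h
    · exact h
    · exfalso
      have := zeroprop A hnonneg hirr μ hpos a (fun j => norm_nonneg _) heq i h.symm i₀
      exact absurd this (ne_of_gt hai₀)
  -- rotate w
  set s : ℂ := (a i₀ : ℂ) / w i₀ with hs
  have hsne : s ≠ 0 := div_ne_zero (by exact_mod_cast (ne_of_gt hai₀)) hi₀
  set z : Fin (n+1) → ℂ := fun i => s * w i with hz
  have hzent : ∀ i, ∑ j, (A i j : ℂ) * z j = (μ : ℂ) * z i := by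
    intro i
    show ∑ j, (A i j:ℂ) * (s * w j) = (μ:ℂ) * (s * w i)
    have h5 : ∑ j, (A i j:ℂ) * (s * w j) = s * ∑ j, (A i j:ℂ) * w j := by
      rw [Finset.mul_sum]
      exact Finset.sum_congr rfl fun j _ => by ring
    rw [h5, hwent i]
    ring
  have habss : ‖s‖ = 1 := by
    rw [hs, norm_div, Complex.norm_real, Real.norm_eq_abs, abs_of_pos hai₀]
    exact div_self (ne_of_gt hai₀)
  have habsz : ∀ i, ‖z i‖ = a i := by
    intro i
    show ‖s * w i‖ = a i
    rw [norm_mul s (w i), habss, one_mul]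
  have hzi₀ : z i₀ = (a i₀ : ℂ) := by
    show (a i₀ : ℂ) / w i₀ * w i₀ = (a i₀ : ℂ)
    exact div_mul_cancel₀ _ hi₀
  set r : Fin (n+1) → ℝ := fun i => (z i).re with hr
  have hAr : A.mulVec r = μ • r := by
    funext i
    have := congrArg Complex.re (hzent i)
    rw [Complex.re_sum] at this
    simp only [Complex.mul_re, Complex.ofReal_re, Complex.ofReal_im, zero_mul, sub_zero] at this
    simpa [Matrix.mulVec, dotProduct, hr] using this
  have hra : ∀ i, r i = a i := by
    have hd : ∀ i, 0 ≤ a i - r i := fun i => by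
      have := Complex.re_le_norm (z i)
      rw [habsz i] at this
      linarith
    have hAd : A.mulVec (a - r) = μ • (a - r) := by
      rw [Matrix.mulVec_sub, heq, hAr, smul_sub]
    have hd0 : (a - r) i₀ = 0 := by
      simp [hr, hzi₀, Pi.sub_apply]
    have := zeroprop A hnonneg hirr μ hpos (a - r) hd hAd i₀ hd0
    intro i
    have := this i
    simp only [Pi.sub_apply] at this
    linarith
  have hzreal : ∀ i, z i = (a i : ℂ) := by
    intro i
    have him : (z i).im = 0 := by
      have h1 : ‖z i‖ ^ 2 = (z i).re ^ 2 + (z i).im ^ 2 := by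
        rw [Complex.sq_norm, Complex.normSq_apply]; ring
      rw [habsz i, ← hra i] at h1
      nlinarith [sq_nonneg (z i).im]
    apply Complex.ext
    · simpa using hra i
    · simp [him]
  -- a is proportional to v
  obtain ⟨i₁, -, hmin⟩ := Finset.exists_min_image Finset.univ (fun i => a i / v i)
    ⟨0, Finset.mem_univ 0⟩
  set t : ℝ := a i₁ / v i₁ with ht
  have hav : ∀ i, a i = t * v i := by
    have hd : ∀ i, 0 ≤ a i - t * v i := by
      intro i
      have := hmin i (Finset.mem_univ i)
      rw [div_le_div_iff₀ (hv i₁) (hv i)] at this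
      have : t * v i ≤ a i := by
        rw [ht, div_mul_eq_mul_div, div_le_iff₀ (hv i₁)]
        linarith [this]
      linarith
    have hAd : A.mulVec (a - t • v) = μ • (a - t • v) := by
      rw [Matrix.mulVec_sub, heq, Matrix.mulVec_smul, hAv, smul_sub, smul_comm]
    have hd0 : (a - t • v) i₁ = 0 := by
      simp only [Pi.sub_apply, Pi.smul_apply, smul_eq_mul, ht]
      rw [div_mul_cancel₀ _ (ne_of_gt (hv i₁))]
      ring
    have := zeroprop A hnonneg hirr μ hpos (a - t • v)
      (fun i => by simpa using hd i) hAd i₁ hd0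
    intro i
    have := this i
    simp only [Pi.sub_apply, Pi.smul_apply, smul_eq_mul] at this
    linarith
  refine ⟨(w i₀ / (a i₀ : ℂ)) * (t : ℂ), fun i => ?_⟩
  have hwi : w i = s⁻¹ * (a i : ℂ) := by
    rw [← hzreal i, hz]
    field_simp
  rw [hwi, hs, hav i]
  push_cast
  field_simp

lemma aevalMulVec {m : ℕ} (B : Matrix (Fin m) (Fin m) ℂ) (μ : ℂ) (x : Fin m → ℂ)
    (hx : B.mulVec x = μ • x) (p : Polynomial ℂ) :
    (Polynomial.aeval B p).mulVec x = (p.eval μ) • x := by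
  induction p using Polynomial.induction_on' with
  | add p q hp hq =>
    rw [map_add, Matrix.add_mulVec, hp, hq, Polynomial.eval_add, add_smul]
  | monomial k a =>
    rw [Polynomial.aeval_monomial, Polynomial.eval_monomial,
      ← Matrix.mulVec_mulVec, powMulVec B μ x hx k, Matrix.mulVec_smul,
      Algebra.algebraMap_eq_smul_one, Matrix.smul_mulVec, Matrix.one_mulVec,
      smul_smul]
    rw [mul_comm]

lemma mapMulVec {m : ℕ} (A : Matrix (Fin m) (Fin m) ℝ) (x : Fin m → ℝ) :
    (A.map Complex.ofReal).mulVec (fun i => (x i : ℂ)) = fun i => ((A.mulVec x) i : ℂ) := by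
  funext i
  simp only [Matrix.mulVec, dotProduct, Matrix.map_apply]
  push_cast
  rfl


/-- For an irreducible nonnegative real matrix `A` with eigenvalues
`μ, μ₂, …, μ_n` (μ the Perron–Frobenius eigenvalue, simple, so `μ ≠ μ_i`) and
Perron projection `P = v uᵀ/(uᵀ v)`, one has
`P = ∏_{i≥2} (A - μ_i I) / ∏_{i≥2} (μ - μ_i)`. -/
theorem stmt5 {n : ℕ} (A : Matrix (Fin (n + 1)) (Fin (n + 1)) ℝ)
    (hnonneg : ∀ i j, 0 ≤ A i j)
    (hirr : ∀ i j, ∃ k : ℕ, 0 < (A ^ (k + 1)) i j)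
    (μ : ℝ) (hpos : 0 < μ)
    (rest : Fin n → ℂ)
    (hchar : (A.map Complex.ofReal).charpoly
        = (Polynomial.X - Polynomial.C (μ : ℂ)) * ∏ i, (Polynomial.X - Polynomial.C (rest i)))
    (hsimple : ∀ i, (μ : ℂ) ≠ rest i)
    (hdom : ∀ i, ‖rest i‖ ≤ μ)
    (v u : Fin (n + 1) → ℝ) (hv : ∀ i, 0 < v i) (hu : ∀ i, 0 < u i)
    (hAv : A.mulVec v = μ • v) (huA : Matrix.vecMul u A = μ • u) :
    ((u ⬝ᵥ v)⁻¹ • Matrix.vecMulVec v u).map Complex.ofReal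
      = (∏ i, ((μ : ℂ) - rest i))⁻¹ •
        Polynomial.aeval (A.map Complex.ofReal)
          (∏ i, (Polynomial.X - Polynomial.C (rest i))) := by
  set B := A.map Complex.ofReal with hB
  set q : Polynomial ℂ := ∏ i, (X - C (rest i)) with hq
  set M := aeval B q with hM
  have haevalsub : aeval B (X - C (μ:ℂ)) = B - (μ:ℂ) • 1 := by
    rw [map_sub, aeval_X, aeval_C, Algebra.algebraMap_eq_smul_one]
  have hBM : B * M = (μ:ℂ) • M := by
    have h := Matrix.aeval_self_charpoly B
    rw [hchar, _root_.map_mul, haevalsub, sub_mul, Matrix.smul_mul, one_mul, sub_eq_zero] at h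
    rw [← hM] at h
    exact h
  have hMB : M * B = (μ:ℂ) • M := by
    have h := Matrix.aeval_self_charpoly B
    rw [hchar, mul_comm, _root_.map_mul, haevalsub, mul_sub, Matrix.mul_smul, mul_one,
      sub_eq_zero] at h
    rw [← hM] at h
    exact h
  have hcol : ∀ j, ∃ c : ℂ, ∀ i, M i j = c * v i := by
    intro j
    apply key A hnonneg hirr μ hpos v u hv hu hAv huA (fun i => M i j)
    funext i
    have h1 : (B * M) i j = ((μ:ℂ) • M) i j := by rw [hBM]
    rw [Matrix.mul_apply] at h1
    simpa [Matrix.mulVec, dotProduct, hB] using h1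
  have hrow : ∀ i, ∃ d : ℂ, ∀ j, M i j = d * u j := by
    intro i
    apply key Aᵀ (fun i j => hnonneg j i)
      (fun i j => by
        obtain ⟨k, hk⟩ := hirr j i
        exact ⟨k, by rw [← Matrix.transpose_pow]; exact hk⟩)
      μ hpos u v hu hv
      (by rw [Matrix.mulVec_transpose]; exact huA)
      (by rw [Matrix.vecMul_transpose]; exact hAv)
      (fun j => M i j)
    rw [Matrix.transpose_map, ← hB, Matrix.mulVec_transpose]
    funext j
    have h1 : (M * B) i j = ((μ:ℂ) • M) i j := by rw [hMB]
    rw [Matrix.mul_apply] at h1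
    simpa [Matrix.vecMul, dotProduct] using h1
  choose c hc using hcol
  choose d hd using hrow
  have hv0 : ((v 0 : ℝ) : ℂ) ≠ 0 := by exact_mod_cast ne_of_gt (hv 0)
  set e : ℂ := d 0 / (v 0 : ℂ) with he
  have hMe : ∀ i j, M i j = e * (v i : ℂ) * (u j : ℂ) := by
    intro i j
    have h3 : c j * v 0 = d 0 * u j := by rw [← hc j 0, hd 0 j]
    have h4 : c j = e * u j := by
      rw [he, div_mul_eq_mul_div, eq_div_iff hv0]
      linear_combination h3
    rw [hc j i, h4]
    ring
  have hBv : B.mulVec (fun i => (v i : ℂ)) = (μ:ℂ) • (fun i => (v i : ℂ)) := by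
    rw [hB, mapMulVec, hAv]
    funext i
    simp only [Pi.smul_apply, smul_eq_mul, Complex.ofReal_mul]
  have hMv := aevalMulVec B (μ:ℂ) _ hBv q
  have hqμ : q.eval (μ:ℂ) = ∏ i, ((μ:ℂ) - rest i) := by
    simp [hq, Polynomial.eval_prod]
  have hqne : (∏ i, ((μ:ℂ) - rest i)) ≠ 0 :=
    Finset.prod_ne_zero_iff.mpr fun i _ => sub_ne_zero.mpr (hsimple i)
  have hS : 0 < u ⬝ᵥ v :=
    Finset.sum_pos (fun i _ => mul_pos (hu i) (hv i)) Finset.univ_nonempty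
  have hSc : ((u ⬝ᵥ v : ℝ) : ℂ) = ∑ j, (u j : ℂ) * (v j : ℂ) := by
    rw [dotProduct]
    push_cast
    rfl
  have hSne : ((u ⬝ᵥ v : ℝ) : ℂ) ≠ 0 := by exact_mod_cast ne_of_gt hS
  have hescalar : e * ((u ⬝ᵥ v : ℝ) : ℂ) = ∏ i, ((μ:ℂ) - rest i) := by
    have h0 := congrFun hMv 0
    simp only [Matrix.mulVec, dotProduct, Pi.smul_apply, smul_eq_mul] at h0
    have h1 : ∑ j, M 0 j * (v j : ℂ) = e * (v 0 : ℂ) * ∑ j, (u j : ℂ) * (v j : ℂ) := by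
      rw [Finset.mul_sum]
      exact Finset.sum_congr rfl fun j _ => by rw [hMe 0 j]; ring
    rw [h1, hqμ] at h0
    rw [hSc]
    have h2 : (e * ∑ j, (u j : ℂ) * (v j : ℂ)) * (v 0 : ℂ)
        = (∏ i, ((μ:ℂ) - rest i)) * (v 0 : ℂ) := by linear_combination h0
    exact mul_right_cancel₀ hv0 h2
  ext i j
  simp only [Matrix.map_apply, Matrix.smul_apply, Matrix.vecMulVec_apply, smul_eq_mul]
  rw [hMe i j]
  have hee : e = (∏ i, ((μ:ℂ) - rest i)) / ((u ⬝ᵥ v : ℝ) : ℂ) := by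
    rw [eq_div_iff hSne]
    exact hescalar
  rw [hee]
  push_cast
  field_simp
end

section
/- Let A be a nonnegative irreducible real n×n matrix with Perron–Frobenius eigenvalue 1. Then all entries of adj(I − A) are strictly positive. -/
open Matrix Polynomial

set_option linter.unusedSectionVars false
set_option maxHeartbeats 1000000


variable {ι : Type*} [Fintype ι] [DecidableEq ι]

lemma evalCharpoly (M : Matrix ι ι ℝ) (t : ℝ) :
    M.charpoly.eval t = (t • (1 : Matrix ι ι ℝ) - M).det := by
  rw [Matrix.charpoly]
  have : (Polynomial.evalRingHom t) (charmatrix M).det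
      = ((charmatrix M).map (Polynomial.evalRingHom t)).det := RingHom.map_det _ _
  simp only [coe_evalRingHom] at this
  rw [this]
  congr 1
  ext i j
  by_cases h : i = j
  · subst h
    simp [charmatrix_apply_eq, Matrix.one_apply]
  · simp [charmatrix_apply_ne _ _ _ h, Matrix.one_apply, h]

lemma detPos {n : ℕ} (A : Matrix (Fin (n+2)) (Fin (n+2)) ℝ)
    (hdom : ∀ z : ℂ, (A.map Complex.ofReal).charpoly.IsRoot z → ‖z‖ ≤ 1) :
    ∀ t : ℝ, 1 < t → 0 < (t • (1 : Matrix (Fin (n+2)) (Fin (n+2)) ℝ) - A).det := by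
  -- no real roots of charpoly above 1
  have hroot : ∀ t : ℝ, 1 < t → A.charpoly.eval t ≠ 0 := by
    intro t ht h0
    have hmap : (A.map Complex.ofReal).charpoly = A.charpoly.map Complex.ofRealHom := by
      have : A.map Complex.ofReal = A.map (Complex.ofRealHom : ℝ →+* ℂ) := rfl
      rw [this, Matrix.charpoly_map]
    have : (A.map Complex.ofReal).charpoly.IsRoot (t : ℂ) := by
      rw [hmap, Polynomial.IsRoot, Polynomial.eval_map]
      rw [show ((t:ℂ)) = Complex.ofRealHom t from rfl, Polynomial.eval₂_at_apply, h0]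
      simp
    have := hdom _ this
    rw [Complex.norm_real, Real.norm_eq_abs] at this
    linarith [abs_of_pos (lt_trans one_pos ht) ▸ this, le_abs_self t]
  intro t ht
  rw [← evalCharpoly]
  -- eventually positive
  have hmono : Filter.Tendsto (fun x => A.charpoly.eval x) Filter.atTop Filter.atTop := by
    apply Polynomial.tendsto_atTop_of_leadingCoeff_nonneg
    · rw [Matrix.charpoly_degree_eq_dim]
      rw [Fintype.card_fin]
      exact_mod_cast Nat.succ_pos (n+1)
    · rw [A.charpoly_monic.leadingCoeff]; exact zero_le_one
  obtain ⟨T, hT1, hT2⟩ := ((hmono.eventually_ge_atTop 1).and (Filter.eventually_ge_atTop (t))).exists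
  rcases lt_trichotomy (A.charpoly.eval t) 0 with h | h | h
  · exfalso
    have hc : ContinuousOn (fun x => A.charpoly.eval x) (Set.Icc t T) :=
      (A.charpoly.continuous).continuousOn
    have h0 : (0:ℝ) ∈ Set.Icc (A.charpoly.eval t) (A.charpoly.eval T) :=
      ⟨h.le, le_trans one_pos.le hT1⟩
    obtain ⟨r, hr, hr0⟩ := intermediate_value_Icc hT2 hc h0
    exact hroot r (lt_of_lt_of_le ht hr.1) hr0
  · exact absurd h (hroot t ht)
  · exact h

section Nonneg
variable {ι : Type*} [Fintype ι] [DecidableEq ι]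

lemma mulEntryNonneg {X Y : Matrix ι ι ℝ} (hX : ∀ i j, 0 ≤ X i j) (hY : ∀ i j, 0 ≤ Y i j) :
    ∀ i j, 0 ≤ (X * Y) i j := fun i j => by
  rw [Matrix.mul_apply]
  exact Finset.sum_nonneg fun k _ => mul_nonneg (hX i k) (hY k j)

lemma powEntryNonneg {X : Matrix ι ι ℝ} (hX : ∀ i j, 0 ≤ X i j) (k : ℕ) :
    ∀ i j, 0 ≤ (X ^ k) i j := by
  induction k with
  | zero => intro i j; rw [pow_zero]; by_cases h : i = j <;> simp [Matrix.one_apply, h]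
  | succ k ih => rw [pow_succ]; exact mulEntryNonneg ih hX

lemma mulEntryMono {X Y Z W : Matrix ι ι ℝ} (hX : ∀ i j, 0 ≤ X i j) (hZ : ∀ i j, 0 ≤ Z i j)
    (hXY : ∀ i j, X i j ≤ Y i j) (hZW : ∀ i j, Z i j ≤ W i j) :
    ∀ i j, (X * Z) i j ≤ (Y * W) i j := fun i j => by
  rw [Matrix.mul_apply, Matrix.mul_apply]
  exact Finset.sum_le_sum fun k _ =>
    mul_le_mul (hXY i k) (hZW k j) (hZ k j) (le_trans (hX i k) (hXY i k))

lemma onePlusEntryNonneg {X : Matrix ι ι ℝ} (hX : ∀ i j, 0 ≤ X i j) :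
    ∀ i j, (0:ℝ) ≤ (1 + X) i j := fun i j => by
  rw [Matrix.add_apply]
  refine add_nonneg ?_ (hX i j)
  by_cases h : i = j <;> simp [Matrix.one_apply, h]

lemma leOnePlus {X : Matrix ι ι ℝ} (hX : ∀ i j, 0 ≤ X i j) :
    ∀ i j, X i j ≤ (1 + X) i j := fun i j => by
  rw [Matrix.add_apply]
  refine le_add_of_nonneg_left ?_
  by_cases h : i = j <;> simp [Matrix.one_apply, h]

lemma oneLeOnePlus {X : Matrix ι ι ℝ} (hX : ∀ i j, 0 ≤ X i j) :
    ∀ i j, (1 : Matrix ι ι ℝ) i j ≤ (1 + X) i j := fun i j => by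
  rw [Matrix.add_apply]
  exact le_add_of_nonneg_right (hX i j)

lemma onePlusPowGe {X : Matrix ι ι ℝ} (hX : ∀ i j, 0 ≤ X i j) (k : ℕ) :
    ∀ i j, (X ^ k) i j ≤ ((1 + X) ^ k) i j := by
  induction k with
  | zero => intro i j; exact le_refl _
  | succ k ih =>
      rw [pow_succ, pow_succ]
      exact mulEntryMono (powEntryNonneg hX k) hX ih (leOnePlus hX)

lemma onePlusPowMono {X : Matrix ι ι ℝ} (hX : ∀ i j, 0 ≤ X i j) {k m : ℕ} (hkm : k ≤ m) :
    ∀ i j, ((1 + X) ^ k) i j ≤ ((1 + X) ^ m) i j := by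
  induction m with
  | zero => intro i j; rw [Nat.le_zero.mp hkm]
  | succ m ih =>
      rcases Nat.lt_or_ge k (m+1) with h | h
      · intro i j
        refine le_trans (ih (Nat.lt_succ_iff.mp h) i j) ?_
        rw [pow_succ, mul_one_add, Matrix.add_apply]
        exact le_add_of_nonneg_right
          (mulEntryNonneg (powEntryNonneg (onePlusEntryNonneg hX) m) hX i j)
      · intro i j
        rw [Nat.le_antisymm hkm h]

lemma existsPosPow {X : Matrix ι ι ℝ} (hX : ∀ i j, 0 ≤ X i j)
    (hirr : ∀ i j, ∃ k : ℕ, 0 < (X ^ (k + 1)) i j) :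
    ∃ m : ℕ, ∀ i j, 0 < ((1 + X) ^ m) i j := by
  classical
  refine ⟨Finset.univ.sup (fun p : ι × ι => (hirr p.1 p.2).choose + 1), fun i j => ?_⟩
  have hk := (hirr i j).choose_spec
  refine lt_of_lt_of_le hk (le_trans (onePlusPowGe hX _ i j) (onePlusPowMono hX ?_ i j))
  exact Finset.le_sup (f := fun p : ι × ι => (hirr p.1 p.2).choose + 1) (Finset.mem_univ (i, j))

end Nonneg

section Key
variable {ι : Type*} [Fintype ι] [DecidableEq ι]

lemma adjBase (M : Matrix ι ι ℝ) (t : ℝ) :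
    t • adjugate (t • (1 : Matrix ι ι ℝ) - M)
      = (t • (1 : Matrix ι ι ℝ) - M).det • (1 : Matrix ι ι ℝ)
        + adjugate (t • (1 : Matrix ι ι ℝ) - M) * M := by
  have h := Matrix.adjugate_mul (t • (1 : Matrix ι ι ℝ) - M)
  rw [Matrix.mul_sub, Matrix.mul_smul, mul_one] at h
  rw [← h]
  abel

lemma adjKey (M : Matrix ι ι ℝ) (t : ℝ) (k : ℕ) :
    t ^ (k+1) • adjugate (t • (1 : Matrix ι ι ℝ) - M)
      = (t • (1 : Matrix ι ι ℝ) - M).det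
          • (∑ l ∈ Finset.range (k+1), t ^ (k - l) • M ^ l)
        + adjugate (t • (1 : Matrix ι ι ℝ) - M) * M ^ (k+1) := by
  induction k with
  | zero =>
      rw [pow_one, pow_one, Finset.range_one, Finset.sum_singleton, Nat.sub_zero, pow_zero,
        pow_zero, one_smul]
      exact adjBase M t
  | succ k ih =>
      have step : t ^ (k+2) • adjugate (t • (1 : Matrix ι ι ℝ) - M)
          = t • (t ^ (k+1) • adjugate (t • (1 : Matrix ι ι ℝ) - M)) := by
        rw [smul_smul, ← pow_succ']
      rw [step, ih, smul_add, smul_smul, mul_comm, ← smul_smul, Finset.smul_sum]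
      have hsum : ∀ l ∈ Finset.range (k+1), t • (t ^ (k - l) • M ^ l)
          = t ^ (k + 1 - l) • M ^ l := by
        intro l hl
        have hlk : l ≤ k := Nat.lt_succ_iff.mp (Finset.mem_range.mp hl)
        rw [smul_smul, ← pow_succ', Nat.sub_add_comm hlk]
      rw [Finset.sum_congr rfl hsum, ← smul_mul_assoc, adjBase M t, Matrix.add_mul,
        Matrix.smul_mul, Matrix.one_mul, Matrix.mul_assoc, ← pow_succ']
      rw [Finset.sum_range_succ (fun l => t ^ (k + 1 - l) • M ^ l) (k+1), Nat.sub_self, pow_zero,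
        one_smul, smul_add]
      abel
end Key

section Boost
variable {ι : Type*} [Fintype ι] [DecidableEq ι]

lemma adjBoost (M : Matrix ι ι ℝ) (hM : ∀ i j, 0 ≤ M i j)
    (hirr : ∀ i j, ∃ k : ℕ, 0 < (M ^ (k + 1)) i j) {t : ℝ} (ht : 1 < t)
    (hdet : 0 < (t • (1 : Matrix ι ι ℝ) - M).det)
    (hD : ∀ i j, 0 ≤ adjugate (t • (1 : Matrix ι ι ℝ) - M) i j) :
    ∀ i j, 0 < adjugate (t • (1 : Matrix ι ι ℝ) - M) i j := by
  intro i j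
  have ht0 : (0:ℝ) < t := lt_trans one_pos ht
  obtain ⟨k, hk⟩ := hirr i j
  have h := adjKey M t (k+1)
  have h2 := congrFun (congrFun h i) j
  set D := adjugate (t • (1 : Matrix ι ι ℝ) - M) with hDdef
  set d := (t • (1 : Matrix ι ι ℝ) - M).det with hddef
  rw [Matrix.add_apply, Matrix.smul_apply, Matrix.smul_apply, Matrix.sum_apply,
    smul_eq_mul, smul_eq_mul] at h2
  have hsum : (M ^ (k+1)) i j
      ≤ ∑ l ∈ Finset.range (k+2), (t ^ (k + 1 - l) • M ^ l) i j := by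
    have hterm : (t ^ (k + 1 - (k+1)) • M ^ (k+1)) i j = (M ^ (k+1)) i j := by
      rw [Nat.sub_self, pow_zero, one_smul]
    rw [← hterm]
    refine Finset.single_le_sum (f := fun l => (t ^ (k + 1 - l) • M ^ l) i j) ?_ ?_
    · intro l _
      show 0 ≤ (t ^ (k + 1 - l) • M ^ l) i j
      rw [Matrix.smul_apply, smul_eq_mul]
      exact mul_nonneg (pow_nonneg ht0.le _) (powEntryNonneg hM l i j)
    · exact Finset.mem_range.mpr (Nat.lt_succ_self _)
  have hDM : 0 ≤ (D * M ^ (k+2)) i j :=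
    mulEntryNonneg hD (powEntryNonneg hM (k+2)) i j
  have hpos : 0 < t ^ (k+2) * D i j := by
    rw [h2]
    have : 0 < d * ∑ l ∈ Finset.range (k+2), (t ^ (k + 1 - l) • M ^ l) i j :=
      mul_pos hdet (lt_of_lt_of_le hk hsum)
    linarith
  by_contra hle
  push_neg at hle
  have : t ^ (k+2) * D i j ≤ 0 := mul_nonpos_of_nonneg_of_nonpos (pow_nonneg ht0.le _) hle
  linarith

lemma adjNonnegOfLarge (M : Matrix ι ι ℝ) [Nonempty ι] (hM : ∀ i j, 0 ≤ M i j) {T : ℝ}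
    (hT : ∀ i, ∑ k, M i k < T) (hdet : 0 < (T • (1 : Matrix ι ι ℝ) - M).det) :
    ∀ i j, 0 ≤ adjugate (T • (1 : Matrix ι ι ℝ) - M) i j := by
  intro i j
  set N := T • (1 : Matrix ι ι ℝ) - M with hN
  have hu : IsUnit N.det := isUnit_iff_ne_zero.mpr hdet.ne'
  set x : ι → ℝ := N⁻¹.mulVec (Pi.single j 1) with hxdef
  have hx : N.mulVec x = Pi.single j 1 := by
    rw [hxdef, Matrix.mulVec_mulVec, Matrix.mul_nonsing_inv N hu, Matrix.one_mulVec]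
  -- x is nonnegative
  have hxnn : ∀ i, 0 ≤ x i := by
    by_contra hneg
    push_neg at hneg
    obtain ⟨i₀, -, hmin⟩ := Finset.exists_min_image Finset.univ x ⟨Classical.arbitrary ι,
      Finset.mem_univ _⟩
    obtain ⟨i₁, hi₁⟩ := hneg
    have hxi₀ : x i₀ < 0 := lt_of_le_of_lt (hmin i₁ (Finset.mem_univ _)) hi₁
    have hrow : (N.mulVec x) i₀ = T * x i₀ - ∑ k, M i₀ k * x k := by
      rw [Matrix.mulVec, dotProduct]
      rw [show (∑ k, N i₀ k * x k) = ∑ k, (T * (1 : Matrix ι ι ℝ) i₀ k * x k - M i₀ k * x k) by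
        apply Finset.sum_congr rfl; intro k _
        rw [hN, Matrix.sub_apply, Matrix.smul_apply, smul_eq_mul, sub_mul]]
      rw [Finset.sum_sub_distrib]
      congr 1
      simp [Matrix.one_apply, mul_ite, ite_mul, mul_assoc]
    have hge : (∑ k, M i₀ k) * x i₀ ≤ ∑ k, M i₀ k * x k := by
      rw [Finset.sum_mul]
      exact Finset.sum_le_sum fun k _ =>
        mul_le_mul_of_nonneg_left (hmin k (Finset.mem_univ _)) (hM i₀ k)
    have hsingle : (0:ℝ) ≤ (N.mulVec x) i₀ := by
      rw [hx]
      by_cases h : i₀ = j <;> simp [Pi.single_apply, h]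
    have hTi : (∑ k, M i₀ k) < T := hT i₀
    nlinarith [hrow, hge, hsingle]
  -- conclude for the adjugate
  have hCij : N⁻¹ i j = x i := by
    rw [hxdef, Matrix.mulVec, dotProduct_single, mul_one]
  have hadj : adjugate N i j = N.det * N⁻¹ i j := by
    rw [Matrix.inv_def, Matrix.smul_apply, smul_eq_mul, Ring.inverse_eq_inv, ← mul_assoc,
      mul_inv_cancel₀ hdet.ne', one_mul]
  rw [hadj, hCij]
  exact mul_nonneg hdet.le (hxnn i)

lemma adjNonnegAll (M : Matrix ι ι ℝ) [Nonempty ι] (hM : ∀ i j, 0 ≤ M i j)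
    (hirr : ∀ i j, ∃ k : ℕ, 0 < (M ^ (k + 1)) i j)
    (hdet : ∀ t : ℝ, 1 < t → 0 < (t • (1 : Matrix ι ι ℝ) - M).det) :
    ∀ t : ℝ, 1 < t → ∀ i j, 0 ≤ adjugate (t • (1 : Matrix ι ι ℝ) - M) i j := by
  classical
  set F : ℝ → Matrix ι ι ℝ := fun t => adjugate (t • (1 : Matrix ι ι ℝ) - M) with hFdef
  have hF : Continuous F := by
    apply Continuous.matrix_adjugate
    exact (continuous_id.smul continuous_const).sub continuous_const
  haveI : PreconnectedSpace (Set.Ioi (1:ℝ)) := Subtype.preconnectedSpace isPreconnected_Ioi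
  have hE : ∀ i j, Continuous fun x : Set.Ioi (1:ℝ) => F x.val i j := fun i j =>
    (hF.matrix_elem i j).comp continuous_subtype_val
  set U : Set (Set.Ioi (1:ℝ)) := {x | ∀ i j, 0 ≤ F x.val i j} with hUdef
  have hUV : U = {x : Set.Ioi (1:ℝ) | ∀ i j, 0 < F x.val i j} := by
    ext x
    constructor
    · intro hx i j
      exact adjBoost M hM hirr x.2 (hdet x.val x.2) hx i j
    · intro hx i j
      exact (hx i j).le
  have hclosed : IsClosed U := by
    rw [hUdef, Set.setOf_forall]
    refine isClosed_iInter fun i => ?_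
    rw [Set.setOf_forall]
    exact isClosed_iInter fun j => isClosed_le continuous_const (hE i j)
  have hopen : IsOpen U := by
    rw [hUV, Set.setOf_forall]
    refine isOpen_iInter_of_finite fun i => ?_
    rw [Set.setOf_forall]
    exact isOpen_iInter_of_finite fun j => isOpen_lt continuous_const (hE i j)
  have hne : U.Nonempty := by
    obtain ⟨i₀, -, hmax⟩ := Finset.exists_max_image Finset.univ (fun i => ∑ k, M i k)
      ⟨Classical.arbitrary ι, Finset.mem_univ _⟩
    set T : ℝ := max (∑ k, M i₀ k) 1 + 1 with hTdef
    have hT1 : 1 < T := by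
      have := le_max_right (∑ k, M i₀ k) 1
      rw [hTdef]; linarith
    have hTrow : ∀ i, ∑ k, M i k < T := by
      intro i
      have h1 := hmax i (Finset.mem_univ _)
      have h2 := le_max_left (∑ k, M i₀ k) 1
      rw [hTdef]; linarith
    exact ⟨⟨T, hT1⟩, fun i j => adjNonnegOfLarge M hM hTrow (hdet T hT1) i j⟩
  have := (IsClopen.eq_univ ⟨hclosed, hopen⟩ hne : U = Set.univ)
  intro t ht i j
  have hx : (⟨t, ht⟩ : Set.Ioi (1:ℝ)) ∈ U := this ▸ Set.mem_univ _
  exact hx i j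

lemma adjOneNonneg (M : Matrix ι ι ℝ) [Nonempty ι] (hM : ∀ i j, 0 ≤ M i j)
    (hirr : ∀ i j, ∃ k : ℕ, 0 < (M ^ (k + 1)) i j)
    (hdet : ∀ t : ℝ, 1 < t → 0 < (t • (1 : Matrix ι ι ℝ) - M).det) :
    ∀ i j, 0 ≤ adjugate (1 - M) i j := by
  intro i j
  have hF : Continuous fun t : ℝ => adjugate (t • (1 : Matrix ι ι ℝ) - M) i j := by
    apply Continuous.matrix_elem
    apply Continuous.matrix_adjugate
    exact (continuous_id.smul continuous_const).sub continuous_const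
  have hlim : Filter.Tendsto (fun t : ℝ => adjugate (t • (1 : Matrix ι ι ℝ) - M) i j)
      (nhdsWithin 1 (Set.Ioi 1)) (nhds (adjugate (1 - M) i j)) := by
    have h1 : (1:ℝ) • (1 : Matrix ι ι ℝ) - M = 1 - M := by rw [one_smul]
    exact h1 ▸ (hF.tendsto 1).mono_left nhdsWithin_le_nhds
  refine ge_of_tendsto hlim ?_
  exact eventually_nhdsWithin_of_forall fun t ht => adjNonnegAll M hM hirr hdet t ht i j

end Boost

section Perron
variable {ι : Type*} [Fintype ι] [DecidableEq ι] [Nonempty ι]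

lemma mulVecPos {P : Matrix ι ι ℝ} (hP : ∀ i j, 0 < P i j) {v : ι → ℝ}
    (hv : ∀ k, 0 ≤ v k) (hv0 : ∃ k, 0 < v k) : ∀ i, 0 < (P.mulVec v) i := by
  intro i
  obtain ⟨k₀, hk₀⟩ := hv0
  rw [Matrix.mulVec, dotProduct]
  refine Finset.sum_pos' (fun k _ => mul_nonneg (hP i k).le (hv k)) ?_
  exact ⟨k₀, Finset.mem_univ _, mul_pos (hP i k₀) hk₀⟩

lemma nePosOfNonneg {v : ι → ℝ} (hv : ∀ i, 0 ≤ v i) (hv0 : v ≠ 0) : ∃ k, 0 < v k := by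
  obtain ⟨k, hk⟩ := Function.ne_iff.mp hv0
  exact ⟨k, lt_of_le_of_ne (hv k) (Ne.symm hk)⟩

lemma perronEq (M : Matrix ι ι ℝ) (hM : ∀ i j, 0 ≤ M i j)
    (hirr : ∀ i j, ∃ k : ℕ, 0 < (M ^ (k + 1)) i j)
    (hdet : ∀ t : ℝ, 1 < t → 0 < (t • (1 : Matrix ι ι ℝ) - M).det)
    (z : ι → ℝ) (hz : ∀ i, 0 ≤ z i) (hz0 : z ≠ 0)
    (hAz : ∀ i, z i ≤ (M.mulVec z) i) : M.mulVec z = z := by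
  obtain ⟨m, hP⟩ := existsPosPow hM hirr
  set P := (1 + M) ^ m with hPdef
  by_contra hne
  set w : ι → ℝ := fun i => (M.mulVec z) i - z i with hwdef
  have hw : ∀ i, 0 ≤ w i := fun i => sub_nonneg.mpr (hAz i)
  have hw0 : w ≠ 0 := by
    intro h
    apply hne
    funext i
    have := congrFun h i
    simp only [hwdef, Pi.zero_apply] at this
    linarith
  set y := P.mulVec z with hydef
  have hy : ∀ i, 0 < y i := mulVecPos hP hz (nePosOfNonneg hz hz0)
  have hPw : ∀ i, 0 < (P.mulVec w) i := mulVecPos hP hw (nePosOfNonneg hw hw0)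
  have hcomm : M * P = P * M :=
    Commute.pow_right (Commute.add_right (Commute.one_right M) (Commute.refl M)) m
  have hMy : M.mulVec y = fun i => y i + (P.mulVec w) i := by
    have h1 : M.mulVec z = z + w := by funext i; simp [hwdef]
    rw [hydef, Matrix.mulVec_mulVec, hcomm, ← Matrix.mulVec_mulVec, h1, Matrix.mulVec_add]
    rfl
  obtain ⟨j₀, -, hjmax⟩ := Finset.exists_max_image Finset.univ y
    ⟨Classical.arbitrary ι, Finset.mem_univ _⟩
  obtain ⟨i₀, -, himin⟩ := Finset.exists_min_image Finset.univ (P.mulVec w)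
    ⟨Classical.arbitrary ι, Finset.mem_univ _⟩
  set Y := y j₀ with hYdef
  set ε := (P.mulVec w) i₀ with hεdef
  have hY : 0 < Y := hy j₀
  have hε : 0 < ε := hPw i₀
  set t : ℝ := 1 + ε / Y with htdef
  have ht : 1 < t := by
    have : 0 < ε / Y := div_pos hε hY
    rw [htdef]; linarith
  have hDnn := adjNonnegAll M hM hirr hdet t ht
  have hcontr : ∀ i, ((t • (1 : Matrix ι ι ℝ) - M).mulVec y) i ≤ 0 := by
    intro i
    rw [Matrix.sub_mulVec, Matrix.smul_mulVec, Matrix.one_mulVec]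
    have h1 : (M.mulVec y) i = y i + (P.mulVec w) i := by rw [hMy]
    have h2 : (ε / Y) * y i ≤ ε := by
      rw [div_mul_eq_mul_div, div_le_iff₀ hY]
      have := hjmax i (Finset.mem_univ _)
      nlinarith [hy i]
    have h3 : ε ≤ (P.mulVec w) i := himin i (Finset.mem_univ _)
    simp only [Pi.sub_apply, Pi.smul_apply, smul_eq_mul]
    rw [htdef] at *
    nlinarith [hy i]
  have hkey := Matrix.adjugate_mul (t • (1 : Matrix ι ι ℝ) - M)
  have h4 : (adjugate (t • (1 : Matrix ι ι ℝ) - M)).mulVec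
      ((t • (1 : Matrix ι ι ℝ) - M).mulVec y)
      = (t • (1 : Matrix ι ι ℝ) - M).det • y := by
    rw [Matrix.mulVec_mulVec, hkey, Matrix.smul_mulVec, Matrix.one_mulVec]
  have h5 := congrFun h4 (Classical.arbitrary ι)
  have h6 : ((adjugate (t • (1 : Matrix ι ι ℝ) - M)).mulVec
      ((t • (1 : Matrix ι ι ℝ) - M).mulVec y)) (Classical.arbitrary ι) ≤ 0 := by
    rw [Matrix.mulVec, dotProduct]
    exact Finset.sum_nonpos fun k _ =>
      mul_nonpos_of_nonneg_of_nonpos (hDnn _ k) (hcontr k)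
  rw [h5] at h6
  have h7 : 0 < ((t • (1 : Matrix ι ι ℝ) - M).det • y) (Classical.arbitrary ι) := by
    simp only [Pi.smul_apply, smul_eq_mul]
    exact mul_pos (hdet t ht) (hy _)
  linarith

lemma perronPos (M : Matrix ι ι ℝ) (hM : ∀ i j, 0 ≤ M i j)
    (hirr : ∀ i j, ∃ k : ℕ, 0 < (M ^ (k + 1)) i j)
    (z : ι → ℝ) (hz : ∀ i, 0 ≤ z i) (hz0 : z ≠ 0)
    (hAz : M.mulVec z = z) : ∀ i, 0 < z i := by
  have hPz : ∀ m : ℕ, ((1 + M) ^ m).mulVec z = (2:ℝ) ^ m • z := by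
    intro m
    induction m with
    | zero => rw [pow_zero, pow_zero, Matrix.one_mulVec, one_smul]
    | succ k ih =>
        rw [pow_succ, ← Matrix.mulVec_mulVec]
        have h1 : (1 + M).mulVec z = (2:ℝ) • z := by
          rw [Matrix.add_mulVec, Matrix.one_mulVec, hAz]
          funext i
          simp only [Pi.add_apply, Pi.smul_apply, smul_eq_mul]
          ring
        rw [h1, Matrix.mulVec_smul, ih, smul_smul]
        congr 1
        ring
  obtain ⟨m, hP⟩ := existsPosPow hM hirr
  intro i
  have h2 : 0 < (((1 + M) ^ m).mulVec z) i := mulVecPos hP hz (nePosOfNonneg hz hz0) i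
  rw [hPz m] at h2
  simp only [Pi.smul_apply, smul_eq_mul] at h2
  nlinarith [pow_pos (two_pos (α := ℝ)) m, h2]

lemma perronZero (M : Matrix ι ι ℝ) (hM : ∀ i j, 0 ≤ M i j)
    (hirr : ∀ i j, ∃ k : ℕ, 0 < (M ^ (k + 1)) i j)
    (hdet : ∀ t : ℝ, 1 < t → 0 < (t • (1 : Matrix ι ι ℝ) - M).det)
    (x : ι → ℝ) (hx : M.mulVec x = x) {j : ι} (hxj : x j = 0) : x = 0 := by
  by_contra hx0
  set z : ι → ℝ := fun i => |x i| with hzdef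
  have hz : ∀ i, 0 ≤ z i := fun i => abs_nonneg _
  have hz0 : z ≠ 0 := by
    intro h
    apply hx0
    funext i
    have := congrFun h i
    simp only [hzdef, Pi.zero_apply, abs_eq_zero] at this
    exact this
  have hAz : ∀ i, z i ≤ (M.mulVec z) i := by
    intro i
    have h1 : z i = |(M.mulVec x) i| := by rw [hx]
    rw [h1, Matrix.mulVec, dotProduct]
    refine le_trans (Finset.abs_sum_le_sum_abs _ _) ?_
    rw [Matrix.mulVec, dotProduct]
    refine Finset.sum_le_sum fun k _ => ?_
    rw [abs_mul, abs_of_nonneg (hM i k)]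
  have heq := perronEq M hM hirr hdet z hz hz0 hAz
  have hpos := perronPos M hM hirr z hz hz0 heq j
  rw [hzdef] at hpos
  simp only [hxj, abs_zero] at hpos
  exact lt_irrefl _ hpos

end Perron


/-- If `A` is a nonnegative irreducible real `n × n` matrix
(`n ≥ 2`) with Perron–Frobenius eigenvalue 1, then all entries of
`adj (I - A)` are strictly positive. -/
theorem stmt12 {n : ℕ} (A : Matrix (Fin (n + 2)) (Fin (n + 2)) ℝ)
    (hnonneg : ∀ i j, 0 ≤ A i j)
    (hirr : ∀ i j, ∃ k : ℕ, 0 < (A ^ (k + 1)) i j)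
    (hsimple : A.charpoly.rootMultiplicity 1 = 1)
    (hdom : ∀ z : ℂ, (A.map Complex.ofReal).charpoly.IsRoot z → ‖z‖ ≤ 1) :
    ∀ i j, 0 < Matrix.adjugate (1 - A) i j := by
  classical
  have hdetA : ∀ t : ℝ, 1 < t → 0 < (t • (1 : Matrix (Fin (n+2)) (Fin (n+2)) ℝ) - A).det :=
    detPos A hdom
  -- transpose versions
  have hnonnegT : ∀ i j, 0 ≤ Aᵀ i j := fun i j => hnonneg j i
  have hirrT : ∀ i j, ∃ k : ℕ, 0 < (Aᵀ ^ (k + 1)) i j := by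
    intro i j
    obtain ⟨k, hk⟩ := hirr j i
    exact ⟨k, by rw [← Matrix.transpose_pow]; exact hk⟩
  have htransp : ∀ t : ℝ, t • (1 : Matrix (Fin (n+2)) (Fin (n+2)) ℝ) - Aᵀ
      = (t • (1 : Matrix (Fin (n+2)) (Fin (n+2)) ℝ) - A)ᵀ := by
    intro t
    rw [Matrix.transpose_sub, Matrix.transpose_smul, Matrix.transpose_one]
  have hdetAT : ∀ t : ℝ, 1 < t →
      0 < (t • (1 : Matrix (Fin (n+2)) (Fin (n+2)) ℝ) - Aᵀ).det := by
    intro t ht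
    rw [htransp, Matrix.det_transpose]
    exact hdetA t ht
  -- determinant of 1 - A vanishes
  have hdet0 : (1 - A).det = 0 := by
    have hr : A.charpoly.IsRoot 1 := by
      have := (Polynomial.rootMultiplicity_pos (A.charpoly_monic.ne_zero)).mp
        (by rw [hsimple]; exact one_pos)
      exact this
    have := evalCharpoly A 1
    rw [hr, one_smul] at this
    exact this.symm
  -- positive left eigenvector
  have hdet0T : (1 - Aᵀ).det = 0 := by
    have h1 : (1 : Matrix (Fin (n+2)) (Fin (n+2)) ℝ) - Aᵀ = (1 - A)ᵀ := by
      rw [Matrix.transpose_sub, Matrix.transpose_one]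
    rw [h1, Matrix.det_transpose]
    exact hdet0
  obtain ⟨u₀, hu₀ne, hu₀⟩ := Matrix.exists_mulVec_eq_zero_iff.mpr hdet0T
  have hu₀eig : Aᵀ.mulVec u₀ = u₀ := by
    rw [Matrix.sub_mulVec, Matrix.one_mulVec] at hu₀
    funext i
    have := congrFun hu₀ i
    simp only [Pi.sub_apply, Pi.zero_apply] at this
    linarith
  set u : Fin (n+2) → ℝ := fun i => |u₀ i| with hudef
  have hunn : ∀ i, 0 ≤ u i := fun i => abs_nonneg _
  have hune : u ≠ 0 := by
    intro h
    apply hu₀ne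
    funext i
    have := congrFun h i
    simp only [hudef, Pi.zero_apply, abs_eq_zero] at this
    exact this
  have huge : ∀ i, u i ≤ (Aᵀ.mulVec u) i := by
    intro i
    have h1 : u i = |(Aᵀ.mulVec u₀) i| := by rw [hu₀eig]
    rw [h1, Matrix.mulVec, dotProduct]
    refine le_trans (Finset.abs_sum_le_sum_abs _ _) ?_
    rw [Matrix.mulVec, dotProduct]
    refine Finset.sum_le_sum fun k _ => ?_
    rw [abs_mul, abs_of_nonneg (hnonnegT i k)]
  have hueq : Aᵀ.mulVec u = u := perronEq Aᵀ hnonnegT hirrT hdetAT u hunn hune huge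
  have hupos : ∀ i, 0 < u i := perronPos Aᵀ hnonnegT hirrT u hunn hune hueq
  -- adjugate of 1 - A is nonnegative
  have hBnn : ∀ i j, 0 ≤ adjugate (1 - A) i j := adjOneNonneg A hnonneg hirr hdetA
  -- diagonal entries are nonzero
  have hdiag : ∀ j, 0 < adjugate (1 - A) j j := by
    intro j
    set N := (1 - A).updateRow j (Pi.single j 1) with hNdef
    have hdetN : N.det ≠ 0 := by
      intro hdN
      obtain ⟨x, hx0, hxN⟩ := Matrix.exists_mulVec_eq_zero_iff.mpr hdN
      have hxj : x j = 0 := by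
        have := congrFun hxN j
        rw [Matrix.mulVec, hNdef] at this
        simp only [Pi.zero_apply] at this
        rw [show ((1 - A).updateRow j (Pi.single j 1)) j = Pi.single j 1 from
          Matrix.updateRow_self, single_dotProduct, one_mul] at this
        exact this
      have hrows : ∀ i, i ≠ j → ((1 - A).mulVec x) i = 0 := by
        intro i hij
        have := congrFun hxN i
        rw [Matrix.mulVec, hNdef] at this
        simp only [Pi.zero_apply] at this
        rw [show ((1 - A).updateRow j (Pi.single j 1)) i = (1 - A) i from
          Matrix.updateRow_ne hij] at this
        exact this
      set g := (1 - A).mulVec x with hgdef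
      have hdot : u ⬝ᵥ g = 0 := by
        rw [hgdef, Matrix.dotProduct_mulVec]
        have hvm : u ᵥ* (1 - A) = 0 := by
          rw [Matrix.vecMul_sub, Matrix.vecMul_one, ← Matrix.mulVec_transpose, hueq, sub_self]
        rw [hvm, zero_dotProduct]
      have hsum : u ⬝ᵥ g = u j * g j := by
        rw [dotProduct]
        refine Finset.sum_eq_single j (fun i _ hij => by rw [hrows i hij, mul_zero]) ?_
        intro h
        exact absurd (Finset.mem_univ j) h
      have hgj : g j = 0 := by
        have := hsum ▸ hdot
        rcases mul_eq_zero.mp this with h | h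
        · exact absurd h (hupos j).ne'
        · exact h
      have hg0 : g = 0 := by
        funext i
        by_cases h : i = j
        · rw [h]; exact hgj
        · exact hrows i h
      have hAx : A.mulVec x = x := by
        rw [hgdef, Matrix.sub_mulVec, Matrix.one_mulVec] at hg0
        funext i
        have := congrFun hg0 i
        simp only [Pi.sub_apply, Pi.zero_apply] at this
        linarith
      exact hx0 (perronZero A hnonneg hirr hdetA x hAx hxj)
    have hBjj : adjugate (1 - A) j j = N.det := Matrix.adjugate_apply (1 - A) j j
    rw [hBjj]
    exact lt_of_le_of_ne (hBjj ▸ hBnn j j) (Ne.symm hdetN)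
  -- spreading positivity
  set B := adjugate (1 - A) with hBdef
  have hAB : A * B = B := by
    have h := Matrix.mul_adjugate (1 - A)
    rw [hdet0, zero_smul, Matrix.sub_mul, Matrix.one_mul, sub_eq_zero] at h
    exact h.symm
  have hBA : B * A = B := by
    have h := Matrix.adjugate_mul (1 - A)
    rw [hdet0, zero_smul, Matrix.mul_sub, Matrix.mul_one, sub_eq_zero] at h
    exact h.symm
  have hPB : ∀ m : ℕ, ((1 + A) ^ m) * B = (2:ℝ) ^ m • B := by
    intro m
    induction m with
    | zero => rw [pow_zero, pow_zero, Matrix.one_mul, one_smul]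
    | succ k ih =>
        rw [pow_succ', mul_assoc, ih, Matrix.mul_smul, Matrix.add_mul, Matrix.one_mul, hAB,
          ← two_smul ℝ B, smul_smul, ← pow_succ]
  have hBP : ∀ m : ℕ, B * ((1 + A) ^ m) = (2:ℝ) ^ m • B := by
    intro m
    induction m with
    | zero => rw [pow_zero, pow_zero, Matrix.mul_one, one_smul]
    | succ k ih =>
        rw [pow_succ, ← mul_assoc, ih, Matrix.smul_mul, Matrix.mul_add, Matrix.mul_one, hBA,
          ← two_smul ℝ B, smul_smul, ← pow_succ]
  obtain ⟨m, hP⟩ := existsPosPow hnonneg hirr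
  set P := (1 + A) ^ m with hPdef
  have hPnn : ∀ i j, 0 ≤ P i j := fun i j => (hP i j).le
  have hPBP : P * (B * P) = ((2:ℝ) ^ m * (2:ℝ) ^ m) • B := by
    rw [hBP m, Matrix.mul_smul, hPB m, smul_smul]
  intro i j
  have hBPnn : ∀ p q, 0 ≤ (B * P) p q := mulEntryNonneg hBnn hPnn
  have hBPjj : 0 < (B * P) j j := by
    rw [Matrix.mul_apply]
    refine Finset.sum_pos' (fun k _ => mul_nonneg (hBnn j k) (hPnn k j)) ?_
    exact ⟨j, Finset.mem_univ _, mul_pos (hdiag j) (hP j j)⟩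
  have hfin : 0 < (P * (B * P)) i j := by
    rw [Matrix.mul_apply]
    refine Finset.sum_pos' (fun k _ => mul_nonneg (hPnn i k) (hBPnn k j)) ?_
    exact ⟨j, Finset.mem_univ _, mul_pos (hP i j) hBPjj⟩
  rw [hPBP] at hfin
  simp only [Matrix.smul_apply, smul_eq_mul] at hfin
  have h2m : (0:ℝ) < (2:ℝ) ^ m * (2:ℝ) ^ m :=
    mul_pos (pow_pos two_pos m) (pow_pos two_pos m)
  nlinarith [hfin, h2m]
end

section
/- Let S be a nonnegative right stochastic n×n real matrix (every row sums to 1), and suppose u ∈ ℂⁿ is a nonzero vector satisfying u_i = Σ_j S_{ij} c_{ij} u_j for all i, where each c_{ij} ∈ ℂ has |c_{ij}| = 1. Then all coordinates of u have the same absolute value, and moreover c_{ij} u_j = u_i whenever S_{ij} ≠ 0. -/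
open Matrix

/-- Parry's convexity step: Let `S` be a nonnegative irreducible
right stochastic real matrix, `u ∈ ℂⁿ` nonzero with `u_i = Σ_j S_{ij} c_{ij} u_j`
for unimodular `c_{ij}`. Then all `|u_i|` are equal, and `c_{ij} u_j = u_i`
whenever `S_{ij} ≠ 0`. -/
theorem stmt15 {n : ℕ} (S : Matrix (Fin (n + 1)) (Fin (n + 1)) ℝ)
    (hnonneg : ∀ i j, 0 ≤ S i j)
    (hrow : ∀ i, ∑ j, S i j = 1)
    (hirr : ∀ i j, ∃ k : ℕ, 0 < (S ^ (k + 1)) i j)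
    (c : Fin (n + 1) → Fin (n + 1) → ℂ) (hc : ∀ i j, ‖c i j‖ = 1)
    (u : Fin (n + 1) → ℂ) (hu : u ≠ 0)
    (heq : ∀ i, u i = ∑ j, (S i j : ℂ) * c i j * u j) :
    (∀ i j, ‖u i‖ = ‖u j‖) ∧
    (∀ i j, S i j ≠ 0 → c i j * u j = u i) := by
  set a : Fin (n + 1) → ℝ := fun i => ‖u i‖ with ha
  -- term norms
  have hterm : ∀ i j, ‖(S i j : ℂ) * c i j * u j‖ = S i j * a j := by
    intro i j
    rw [norm_mul, norm_mul, hc i j, Complex.norm_real,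
      Real.norm_of_nonneg (hnonneg i j)]
    ring
  -- subadditivity
  have hsub : ∀ i, a i ≤ ∑ j, S i j * a j := by
    intro i
    calc a i = ‖∑ j, (S i j : ℂ) * c i j * u j‖ := by rw [ha]; rw [← heq i]
    _ ≤ ∑ j, ‖(S i j : ℂ) * c i j * u j‖ := by
        exact norm_sum_le _ _
    _ = ∑ j, S i j * a j := by simp only [hterm]
  -- maximum
  obtain ⟨i₀, -, hi₀⟩ := Finset.exists_max_image Finset.univ a ⟨0, Finset.mem_univ 0⟩
  set M := a i₀ with hM
  have hle : ∀ j, a j ≤ M := fun j => hi₀ j (Finset.mem_univ j)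
  -- step: if a i = M and S i j ≠ 0 then a j = M
  have hstep : ∀ i, a i = M → ∀ j, S i j ≠ 0 → a j = M := by
    intro i hai j hSij
    have h1 : ∑ j, S i j * a j ≤ ∑ j, S i j * M := by
      apply Finset.sum_le_sum
      intro k _
      exact mul_le_mul_of_nonneg_left (hle k) (hnonneg i k)
    have h2 : ∑ j, S i j * M = M := by
      rw [← Finset.sum_mul, hrow i, one_mul]
    have heqsum : ∑ j, S i j * a j = ∑ j, S i j * M := by
      have := hsub i
      rw [hai] at this
      linarith [h1, this, h2.le, h2.ge]
    have hzero : ∑ j, S i j * (M - a j) = 0 := by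
      have : ∑ j, (S i j * M - S i j * a j) = 0 := by
        rw [Finset.sum_sub_distrib, heqsum]; ring
      rw [← this]
      apply Finset.sum_congr rfl
      intro k _; ring
    have := (Finset.sum_eq_zero_iff_of_nonneg (fun k _ =>
      mul_nonneg (hnonneg i k) (by linarith [hle k]))).mp hzero j (Finset.mem_univ j)
    have hMj : M - a j = 0 := by
      rcases mul_eq_zero.mp this with h | h
      · exact absurd h hSij
      · exact h
    linarith
  -- propagation along powers
  have hpow : ∀ k : ℕ, ∀ i j, a i = M → 0 < (S ^ k) i j → a j = M := by
    intro k
    induction k with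
    | zero =>
      intro i j hai hpos
      rw [pow_zero] at hpos
      by_cases h : i = j
      · rwa [← h]
      · simp [Matrix.one_apply, h] at hpos
    | succ k ih =>
      intro i j hai hpos
      rw [pow_succ, Matrix.mul_apply] at hpos
      have : ∃ l, 0 < (S ^ k) i l * S l j := by
        by_contra h
        push_neg at h
        have : ∑ l, (S ^ k) i l * S l j ≤ 0 := Finset.sum_nonpos fun l _ => h l
        linarith
      obtain ⟨l, hl⟩ := this
      have hSlj : 0 < S l j := by
        rcases lt_or_eq_of_le (hnonneg l j) with h | h
        · exact h
        · rw [← h, mul_zero] at hl; linarith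
      have hSkil : 0 < (S ^ k) i l := by nlinarith
      exact hstep l (ih i l hai hSkil) j (ne_of_gt hSlj)
  -- all a j equal M
  have hall : ∀ j, a j = M := by
    intro j
    obtain ⟨k, hk⟩ := hirr i₀ j
    exact hpow (k + 1) i₀ j rfl hk
  have part1 : ∀ i j, ‖u i‖ = ‖u j‖ := by
    intro i j
    rw [show ‖u i‖ = a i from rfl, show ‖u j‖ = a j from rfl,
      hall i, hall j]
  -- M > 0
  have hMpos : 0 < M := by
    rcases lt_or_eq_of_le (by positivity : (0:ℝ) ≤ M) with h | h
    · exact h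
    · exfalso
      apply hu
      funext j
      have : a j = 0 := by rw [hall j, ← h]
      exact norm_eq_zero.mp this
  refine ⟨part1, ?_⟩
  intro i j hSij
  have hSijpos : 0 < S i j := lt_of_le_of_ne (hnonneg i j) (Ne.symm hSij)
  set t : Fin (n + 1) → ℂ := fun k => (S i k : ℂ) * c i k * u k with ht
  have htnorm : ∀ k, ‖t k‖ = S i k * M := by
    intro k
    rw [ht]
    show ‖(S i k : ℂ) * c i k * u k‖ = _
    rw [hterm i k, hall k]
  have hsumt : ∑ k, t k = u i := (heq i).symm
  have hrest : u i = t j + ∑ k ∈ Finset.univ.erase j, t k := by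
    rw [← hsumt, Finset.add_sum_erase _ _ (Finset.mem_univ j)]
  have hnorm_ui : ‖u i‖ = M := by
    show ‖u i‖ = M; rw [← hall i]
  have hnorm_rest_le : ‖∑ k ∈ Finset.univ.erase j, t k‖ ≤ ∑ k ∈ Finset.univ.erase j, S i k * M := by
    calc ‖∑ k ∈ Finset.univ.erase j, t k‖ ≤ ∑ k ∈ Finset.univ.erase j, ‖t k‖ :=
      norm_sum_le _ _
    _ = ∑ k ∈ Finset.univ.erase j, S i k * M := by
      exact Finset.sum_congr rfl fun k _ => htnorm k
  have hsumnorm : S i j * M + ∑ k ∈ Finset.univ.erase j, S i k * M = M := by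
    have h := Finset.add_sum_erase Finset.univ (fun k => S i k * M) (Finset.mem_univ j)
    rw [h, ← Finset.sum_mul, hrow i, one_mul]
  have hadd : ‖t j + ∑ k ∈ Finset.univ.erase j, t k‖ = ‖t j‖ + ‖∑ k ∈ Finset.univ.erase j, t k‖ := by
    have h1 : ‖t j + ∑ k ∈ Finset.univ.erase j, t k‖ = M := by rw [← hrest, hnorm_ui]
    have h2 : ‖t j‖ + ‖∑ k ∈ Finset.univ.erase j, t k‖ ≤ M := by
      rw [htnorm j]; linarith [hnorm_rest_le]
    have h3 : M ≤ ‖t j‖ + ‖∑ k ∈ Finset.univ.erase j, t k‖ := by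
      rw [← h1]; exact norm_add_le _ _
    linarith
  have hray : SameRay ℝ (t j) (∑ k ∈ Finset.univ.erase j, t k) := sameRay_iff_norm_add.mpr hadd
  have hray2 : SameRay ℝ (t j) (u i) := by
    rw [hrest]
    exact (SameRay.refl _).add_right hray
  have hsmul := hray2.norm_smul_eq
  rw [htnorm j, hnorm_ui] at hsmul
  -- (S i j * M) • u i = M • t j
  have hC : ((S i j : ℂ) * M) * u i = (M : ℂ) * ((S i j : ℂ) * c i j * u j) := by
    have := hsmul
    simp only [Complex.real_smul, Complex.ofReal_mul] at this
    exact this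
  have hM0 : (M : ℂ) ≠ 0 := by exact_mod_cast hMpos.ne'
  have hS0 : (S i j : ℂ) ≠ 0 := by exact_mod_cast hSij
  field_simp at hC
  have : (S i j : ℂ) * u i = (S i j : ℂ) * (c i j * u j) := by
    apply mul_left_cancel₀ hM0
    rw [show (M:ℂ) * ((S i j : ℂ) * (c i j * u j)) = (M:ℂ) * ((S i j:ℂ) * c i j * u j) by ring]
    rw [hC]; ring
  exact (mul_left_cancel₀ hS0 this).symm
end
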